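/- (Shirshov's special bracketing) Suppose w and u are associative Lyndon–Shirshov words and u is a subword of w, say w = a u b. Then there exists a bracketing [w]_u of w of the form [a [u c] d] with b = cd, obtained from the standard bracketing of w (in which u begins a bracketed subword [uc]) by rebracketing [uc] as the left-normed product [...[[u][c_1]]...[c_k]] where c = c_1...c_k is the Lyndon factorization of c with c_1 ≤ ... ≤ c_k, such that the deg-lex leading associative monomial of [w]_u equals w. -/

import Mathlib

noncomputable section

variable {X : Type*} [LinearOrder X] (k : Type*) [Field k]

def llt : List X → List X → Prop
  | [], _ => False
  | _ :: _, [] => True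
  | a :: u, b :: v => a < b ∨ (a = b ∧ llt u v)

def IsLS (w : List X) : Prop :=
  w ≠ [] ∧ ∀ u v : List X, u ≠ [] → v ≠ [] → w = u ++ v → llt (v ++ u) w

/-- deg-lex order -/
def dlt (u v : List X) : Prop :=
  u.length < v.length ∨ (u.length = v.length ∧ llt u v)

/-- the free associative algebra with basis the free monoid on X -/
abbrev FA (k : Type*) [Field k] (X : Type*) := MonoidAlgebra k (FreeMonoid X)

/-- the generators x ∈ X inside the free associative algebra -/
def gens : Set (FA k X) := Set.range fun x : X => MonoidAlgebra.single (FreeMonoid.of x) (1 : k)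

/-- the leading (deg-lex maximal) monomial of f is w -/
def IsLeading (f : FA k X) (w : List X) : Prop :=
  f.coeff (FreeMonoid.ofList w) ≠ 0 ∧ ∀ v : List X, f.coeff (FreeMonoid.ofList v) ≠ 0 → v = w ∨ dlt v w

/-- underlying associative word of a nonassociative word -/
def mword : FreeMagma X → List X
  | .of x => [x]
  | .mul a b => mword a ++ mword b

/-- evaluation of a nonassociative word in the free associative algebra
via the commutator bracket -/
def evalM : FreeMagma X → FA k X
  | .of x => MonoidAlgebra.single (FreeMonoid.of x) 1
  | .mul a b => evalM a * evalM b - evalM b * evalM a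

/-- nonassociative Lyndon--Shirshov word -/
def IsNLS : FreeMagma X → Prop
  | .of _ => True
  | .mul a b => IsNLS a ∧ IsNLS b ∧ IsLS (mword a ++ mword b) ∧
      (match a with
        | .of _ => True
        | .mul _ a2 => ¬ llt (mword b) (mword a2))

/-- standard bracketing tree: at each node the right factor is the longest
proper Lyndon--Shirshov suffix -/
def IsStd : FreeMagma X → Prop
  | .of _ => True
  | .mul a b => IsStd a ∧ IsStd b ∧ IsLS (mword a ++ mword b) ∧ IsLS (mword b) ∧
      ∀ s : List X, s ≠ [] → s ≠ mword a ++ mword b → s <:+ mword a ++ mword b →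
        IsLS s → s.length ≤ (mword b).length

/-- flattening of a tree of trees -/
def mjoin : FreeMagma (FreeMagma X) → FreeMagma X
  | .of t => t
  | .mul a b => .mul (mjoin a) (mjoin b)

/-- the list of leaves of a binary tree -/
def leaves {α : Type*} : FreeMagma α → List α
  | .of x => [x]
  | .mul a b => leaves a ++ leaves b

/-- `Occurs s t p` : `s` occurs as a subtree of `t` with exactly the word `p`
to its left -/
def Occurs (s : FreeMagma X) : FreeMagma X → List X → Prop
  | .of x, p => s = .of x ∧ p = []
  | .mul l r, p => (s = .mul l r ∧ p = []) ∨ Occurs s l p ∨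
      ∃ q, Occurs s r q ∧ p = mword l ++ q

/-!
Call a bracketing leading if each of its brackets `[x y]` satisfies
`llt (word y ++ word x) (word x ++ word y)`. Its evaluation is then homogeneous with leading word
its own word and leading coefficient `1`: the top monomial of `[x][y]` is the product of the top
monomials, while every monomial of `[y][x]` lies strictly below it. Standard bracketings are
leading, since a Lyndon–Shirshov word exceeds its rotations.

To bracket `w = a u b` with `[u]` as a block, descend along standard factorizations `w = w₁ w₂`
(`w₂` the `llt`-largest proper suffix): `u` never straddles `w₁ | w₂`, for otherwise the part of
`u` in `w₁` followed by `w₂` would be a longer Lyndon–Shirshov suffix than `w₂`. The descent ends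
at a factor `u c` beginning with `u`. There `c = c₁ ⋯ c_k` is split greedily into longest
Lyndon–Shirshov prefixes, which is its Lyndon factorization, and each `cᵢ` added to the block
`m = u c₁ ⋯ cᵢ₋₁` gives a leading bracket `[m cᵢ]`, because `cᵢ` cannot be a prefix of `m`.
-/

theorem llt_irrefl : ∀ u : List X, ¬ llt u u
  | [] => id
  | a :: u => by
    rintro (h | ⟨-, h⟩)
    exacts [lt_irrefl a h, llt_irrefl u h]

theorem llt_trans : ∀ {u v w : List X}, llt u v → llt v w → llt u w
  | [], _, _, h, _ => h.elim
  | _ :: _, [], _, _, h => h.elim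
  | _ :: _, _ :: _, [], _, _ => trivial
  | _ :: _, _ :: _, _ :: _, h₁, h₂ => by
    rcases h₁ with h₁ | ⟨rfl, h₁⟩ <;> rcases h₂ with h₂ | ⟨rfl, h₂⟩
    · exact Or.inl (h₁.trans h₂)
    · exact Or.inl h₁
    · exact Or.inl h₂
    · exact Or.inr ⟨rfl, llt_trans h₁ h₂⟩

theorem llt_asymm {u v : List X} (h : llt u v) : ¬ llt v u :=
  fun h' => llt_irrefl u (llt_trans h h')

theorem llt_or_llt_of_ne : ∀ {u v : List X}, u ≠ v → llt u v ∨ llt v u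
  | [], [], h => absurd rfl h
  | [], _ :: _, _ => Or.inr trivial
  | _ :: _, [], _ => Or.inl trivial
  | a :: u, b :: v, h => by
    rcases lt_trichotomy a b with hab | rfl | hab
    · exact Or.inl (Or.inl hab)
    · rcases llt_or_llt_of_ne (fun he => h (he ▸ rfl) : u ≠ v) with h' | h'
      · exact Or.inl (Or.inr ⟨rfl, h'⟩)
      · exact Or.inr (Or.inr ⟨rfl, h'⟩)
    · exact Or.inr (Or.inl hab)

theorem llt_append_right : ∀ (u : List X) {x : List X}, x ≠ [] → llt (u ++ x) u
  | [], [], hx => absurd rfl hx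
  | [], _ :: _, _ => trivial
  | _ :: u, _, hx => Or.inr ⟨rfl, llt_append_right u hx⟩

theorem not_llt_append (u x : List X) : ¬ llt u (u ++ x) := by
  rcases eq_or_ne x [] with rfl | hx
  · rw [List.append_nil]
    exact llt_irrefl u
  · exact llt_asymm (llt_append_right u hx)

theorem llt_append_left_iff : ∀ (u : List X) {x y : List X}, llt (u ++ x) (u ++ y) ↔ llt x y
  | [], _, _ => Iff.rfl
  | a :: u, _, _ => by
    simp only [List.cons_append, llt, lt_irrefl, true_and, false_or, llt_append_left_iff u]

theorem llt_append_of_length_eq : ∀ {u v : List X}, llt u v → u.length = v.length →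
    ∀ x y : List X, llt (u ++ x) (v ++ y)
  | [], _, h, _, _, _ => h.elim
  | _ :: _, [], _, hl, _, _ => by simp at hl
  | _ :: _, _ :: _, h, hl, x, y => by
    rcases h with h | ⟨rfl, h⟩
    · exact Or.inl h
    · exact Or.inr ⟨rfl, llt_append_of_length_eq h (by simpa using hl) x y⟩

theorem llt_append_cases_right : ∀ (s : List X) {t y : List X}, llt t (s ++ y) →
    s <+: t ∨ ∀ y', llt t (s ++ y')
  | [], _, _, _ => Or.inl List.nil_prefix
  | _ :: _, [], _, h => h.elim
  | _ :: s, _ :: _, _, h => by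
    rcases h with h | ⟨rfl, h⟩
    · exact Or.inr fun _ => Or.inl h
    · rcases llt_append_cases_right s h with h' | h'
      · exact Or.inl (List.cons_prefix_cons.2 ⟨rfl, h'⟩)
      · exact Or.inr fun y' => Or.inr ⟨rfl, h' y'⟩

def StrongLlt (s t : List X) : Prop := ∀ x y : List X, llt (s ++ x) (t ++ y)

theorem StrongLlt.trans {s t r : List X} (h₁ : StrongLlt s t) (h₂ : StrongLlt t r) :
    StrongLlt s r :=
  fun x y => llt_trans (h₁ x []) (h₂ [] y)

theorem strongLlt_of_llt : ∀ {s t : List X}, llt s t → ¬ s <+: t → ¬ t <+: s → StrongLlt s t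
  | [], _, _, hs, _ => absurd List.nil_prefix hs
  | _ :: _, [], _, _, ht => absurd List.nil_prefix ht
  | _ :: _, _ :: _, h, hs, ht => by
    rcases h with h | ⟨rfl, h⟩
    · exact fun _ _ => Or.inl h
    · have ih := strongLlt_of_llt h (fun hp => hs (List.cons_prefix_cons.2 ⟨rfl, hp⟩))
        (fun hp => ht (List.cons_prefix_cons.2 ⟨rfl, hp⟩))
      exact fun x y => Or.inr ⟨rfl, ih x y⟩

theorem llt_of_llt_append {s t x y : List X} (h : llt (s ++ x) (t ++ y)) (hs : ¬ s <+: t)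
    (ht : ¬ t <+: s) : llt s t :=
  (llt_or_llt_of_ne (by rintro rfl; exact hs (List.prefix_refl s))).resolve_right
    fun h' => llt_asymm h (strongLlt_of_llt h' ht hs y x)

theorem suffix_append_cases {α : Type*} {t x y : List α} (h : t <:+ x ++ y) :
    t <:+ y ∨ ∃ x', x' <:+ x ∧ x' ≠ [] ∧ t = x' ++ y := by
  obtain ⟨p, hp⟩ := h
  rcases List.append_eq_append_iff.1 hp with ⟨x', rfl, rfl⟩ | ⟨y', rfl, rfl⟩
  · rcases eq_or_ne x' [] with rfl | hx'
    · exact Or.inl (List.suffix_refl y)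
    · exact Or.inr ⟨x', List.suffix_append p x', hx', rfl⟩
  · exact Or.inl (List.suffix_append y' t)

theorem exists_append_of_suffix_ne {α : Type*} {s w : List α} (hs : s <:+ w) (hsw : s ≠ w) :
    ∃ p, p ≠ [] ∧ w = p ++ s := by
  obtain ⟨p, rfl⟩ := hs
  exact ⟨p, by rintro rfl; exact hsw rfl, rfl⟩

theorem IsLS.ne_nil {w : List X} (hw : IsLS w) : w ≠ [] := hw.1

theorem IsLS.llt_rotate {u v : List X} (huv : IsLS (u ++ v)) (hu : u ≠ []) (hv : v ≠ []) :
    llt (v ++ u) (u ++ v) :=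
  huv.2 u v hu hv rfl

theorem isLS_singleton (x : X) : IsLS [x] := by
  refine ⟨List.cons_ne_nil x [], fun u v hu hv huv => ?_⟩
  have := congrArg List.length huv
  have := List.length_pos_of_ne_nil hu
  have := List.length_pos_of_ne_nil hv
  simp only [List.length_singleton, List.length_append] at *
  omega

theorem IsLS.not_prefix_of_suffix {w s : List X} (hw : IsLS w) (hs : s <:+ w) (hsw : s ≠ w)
    (hsn : s ≠ []) : ¬ s <+: w := by
  rintro ⟨t, rfl⟩
  obtain ⟨p, hp, hps⟩ := exists_append_of_suffix_ne hs hsw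
  have ht : t ≠ [] := by rintro rfl; simp at hsw
  have h₁ : llt (s ++ p) (s ++ t) := hw.2 p s hp hsn hps
  have h₂ : llt (t ++ s) (s ++ t) := hw.2 s t hsn ht rfl
  have hlen : p.length = t.length := by
    have := congrArg List.length hps
    simp only [List.length_append] at this
    omega
  rw [llt_append_left_iff] at h₁
  have h₃ := llt_append_of_length_eq h₁ hlen s s
  rw [← hps] at h₃
  exact llt_asymm h₃ h₂

theorem IsLS.suffix_llt {w s : List X} (hw : IsLS w) (hs : s <:+ w) (hsw : s ≠ w)
    (hsn : s ≠ []) : llt s w := by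
  obtain ⟨p, hp, hps⟩ := exists_append_of_suffix_ne hs hsw
  exact llt_of_llt_append (x := p) (y := []) (by simpa [← hps] using hw.2 p s hp hsn hps)
    (hw.not_prefix_of_suffix hs hsw hsn) fun hp => hsw (hs.eq_of_length_le hp.length_le)

theorem IsLS.suffix_strongLlt {w s : List X} (hw : IsLS w) (hs : s <:+ w) (hsw : s ≠ w)
    (hsn : s ≠ []) : StrongLlt s w :=
  strongLlt_of_llt (hw.suffix_llt hs hsw hsn) (hw.not_prefix_of_suffix hs hsw hsn)
    fun hp => hsw (hs.eq_of_length_le hp.length_le)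

theorem isLS_of_suffix_llt {w : List X} (hw : w ≠ [])
    (h : ∀ s, s <:+ w → s ≠ w → s ≠ [] → llt s w) : IsLS w := by
  refine ⟨hw, fun u v hu hv huv => ?_⟩
  have hsv : v <:+ w := ⟨u, huv.symm⟩
  have hvw : v ≠ w := by rintro rfl; simp [hu] at huv
  have hlt := h v hsv hvw hv
  have hvp : ¬ v <+: w := fun ⟨t, ht⟩ => not_llt_append v t (ht ▸ hlt)
  have hwp : ¬ w <+: v :=
    fun hp => hvw (hsv.eq_of_length_le hp.length_le)
  simpa [huv] using strongLlt_of_llt hlt hvp hwp u []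

theorem isLS_append {u v : List X} (hu : IsLS u) (hv : IsLS v) (h : llt v u) :
    IsLS (u ++ v) := by
  have hsuffix : ∀ t, t <:+ v → t ≠ [] → llt t (u ++ v) := by
    intro t ht htn
    by_cases huv : u <+: v
    · obtain ⟨e, rfl⟩ := huv
      have he : e ≠ [] := by rintro rfl; simp [llt_irrefl] at h
      have hev : e ≠ u ++ e := by simpa using hu.ne_nil
      by_cases hte : t = u ++ e
      · rw [hte, llt_append_left_iff]
        exact hv.suffix_llt (List.suffix_append u e) hev he
      · rcases llt_append_cases_right u (hv.suffix_llt ht hte htn) with ⟨t₂, rfl⟩ | hlt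
        · have ht₂ : t₂ ≠ [] := by
            rintro rfl
            exact hv.not_prefix_of_suffix (by simpa using ht) (by simpa using hte) hu.ne_nil
              (List.prefix_append u e)
          rw [llt_append_left_iff]
          refine hv.suffix_llt ((List.suffix_append u t₂).trans ht) ?_ ht₂
          rintro rfl
          simpa [hu.ne_nil] using ht.length_le
        · exact hlt (u ++ e)
    · have hvu : ¬ v <+: u := fun ⟨e, he⟩ => not_llt_append v e (he ▸ h)
      have hs : StrongLlt t u := by
        by_cases htv : t = v
        · exact htv ▸ strongLlt_of_llt h hvu huv
        · exact (hv.suffix_strongLlt ht htv htn).trans (strongLlt_of_llt h hvu huv)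
      simpa using hs [] v
  refine isLS_of_suffix_llt (by simp [hu.ne_nil]) fun t ht htw htn => ?_
  rcases suffix_append_cases ht with ht | ⟨u', hu', hu'n, rfl⟩
  · exact hsuffix t ht htn
  · exact hu.suffix_strongLlt hu' (by rintro rfl; exact htw rfl) hu'n v v

theorem isLS_append_of_prefix {u u₁ u₂ w : List X} (hu : IsLS u) (hw : IsLS w)
    (hsplit : u = u₁ ++ u₂) (h₁ : u₁ ≠ []) (h₂ : u₂ ≠ []) (hpre : u₂ <+: w) :
    IsLS (u₁ ++ w) := by
  obtain ⟨r, rfl⟩ := hpre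
  have hwu : StrongLlt (u₂ ++ r) u := fun x y => by
    simpa using hu.suffix_strongLlt ⟨u₁, hsplit.symm⟩ (by simp [hsplit, h₁]) h₂ (r ++ x) y
  rw [← List.append_assoc, ← hsplit]
  refine isLS_of_suffix_llt (by simp [hu.ne_nil]) fun t ht htw htn => ?_
  rcases suffix_append_cases ht with ht | ⟨u', hu', hu'n, rfl⟩
  · have htw : t ≠ u₂ ++ r := by
      rintro rfl
      simpa [h₂] using ht.length_le
    simpa using ((hw.suffix_strongLlt (ht.trans (List.suffix_append u₂ r)) htw htn).trans
      hwu) [] r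
  · exact hu.suffix_strongLlt hu' (by rintro rfl; exact htw rfl) hu'n r r

theorem exists_llt_max : ∀ L : List (List X), L ≠ [] → ∃ v ∈ L, ∀ s ∈ L, s = v ∨ llt s v
  | [], h => absurd rfl h
  | s :: L, _ => by
    rcases eq_or_ne L [] with rfl | hL
    · exact ⟨s, by simp⟩
    obtain ⟨v, hv, hmax⟩ := exists_llt_max L hL
    by_cases hsv : s = v ∨ llt s v
    · exact ⟨v, List.mem_cons_of_mem s hv, by simpa [hsv] using hmax⟩
    · have hvs : llt v s := (llt_or_llt_of_ne (not_or.1 hsv).1).resolve_left (not_or.1 hsv).2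
      refine ⟨s, List.mem_cons_self, ?_⟩
      simp only [List.mem_cons, forall_eq_or_imp, true_or, true_and]
      intro t ht
      rcases hmax t ht with rfl | htv
      exacts [Or.inr hvs, Or.inr (llt_trans htv hvs)]

theorem exists_llt_max_suffix {w : List X} (hw : w ≠ []) :
    ∃ v, v <:+ w ∧ v ≠ [] ∧ ∀ s, s <:+ w → s ≠ [] → s = v ∨ llt s v := by
  obtain ⟨v, hv, hmax⟩ := exists_llt_max (w.tails.filter (· ≠ []))
    (List.ne_nil_of_mem (a := w) (by simpa using hw))
  simp only [List.mem_filter, List.mem_tails, decide_eq_true_eq, and_imp] at hv hmax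
  exact ⟨v, hv.1, hv.2, hmax⟩

/-- The right factor is taken to be the `llt`-largest proper suffix. -/
theorem IsLS.exists_standard_factorization {w : List X} (hw : IsLS w) (hlen : 2 ≤ w.length) :
    ∃ w₁ w₂, w = w₁ ++ w₂ ∧ IsLS w₁ ∧ IsLS w₂ ∧
      ∀ s, s <:+ w → s ≠ w → IsLS s → s.length ≤ w₂.length := by
  obtain ⟨x, w, rfl⟩ := List.exists_cons_of_ne_nil hw.ne_nil
  obtain ⟨v, ⟨p, rfl⟩, hvn, hmax⟩ :=
    exists_llt_max_suffix (w := w) (List.ne_nil_of_length_pos (by simp at hlen; omega))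
  refine ⟨x :: p, v, rfl, ?_, ?_, ?_⟩
  · refine isLS_of_suffix_llt (List.cons_ne_nil x p) fun s hs hsp hsn => ?_
    obtain ⟨q, rfl⟩ := (List.suffix_cons_iff.1 hs).resolve_left hsp
    have hlt := hw.suffix_llt (s := s ++ v) ⟨x :: q, by simp⟩ (fun he => by
      have := congrArg List.length he
      simp at this
      omega) (by simp [hsn])
    rw [← List.cons_append] at hlt
    refine llt_of_llt_append hlt (fun ⟨t, ht⟩ => ?_)
      fun hp => hsp (hs.eq_of_length_le hp.length_le)
    have htn : t ≠ [] := by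
      rintro rfl
      have := congrArg List.length ht
      simp at this
      omega
    have ht' : t <:+ q ++ s := by
      refine (List.suffix_cons_iff.1 ⟨s, ht⟩).resolve_left fun he => hsn ?_
      simpa [he] using ht
    rw [← ht, List.append_assoc, llt_append_left_iff] at hlt
    obtain ⟨r, hr⟩ := ht'
    rcases hmax (t ++ v) ⟨r, by rw [← List.append_assoc, hr]⟩ (by simp [htn]) with he | hlt'
    · exact htn (by simpa using he)
    · exact llt_asymm hlt hlt'
  · refine isLS_of_suffix_llt hvn fun s hs hsv hsn => ?_
    exact (hmax s (hs.trans (List.suffix_append p v)) hsn).resolve_left hsv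
  · intro s hs hsw hsLS
    by_contra! hlen
    have hs' : s <:+ p ++ v := (List.suffix_cons_iff.1 hs).resolve_left hsw
    have hvs : v <:+ s := List.suffix_of_suffix_length_le (List.suffix_append p v) hs' hlen.le
    rcases hmax s hs' hsLS.ne_nil with rfl | hlt
    · exact lt_irrefl _ hlen
    · exact llt_asymm hlt (hsLS.suffix_llt hvs (by rintro rfl; exact lt_irrefl _ hlen) hvn)

theorem exists_isStd : ∀ {w : List X}, IsLS w → ∃ t, mword t = w ∧ IsStd t
  | [], hw => absurd rfl hw.ne_nil
  | [x], _ => ⟨.of x, rfl, trivial⟩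
  | x :: y :: w, hw => by
    obtain ⟨w₁, w₂, hw₁₂, h₁, h₂, hmax⟩ :=
      hw.exists_standard_factorization (by simp)
    have : w₁.length + w₂.length = w.length + 2 := by simpa using (congrArg List.length hw₁₂).symm
    have := List.length_pos_of_ne_nil h₁.ne_nil
    have := List.length_pos_of_ne_nil h₂.ne_nil
    obtain ⟨t₁, rfl, hs₁⟩ := exists_isStd h₁
    obtain ⟨t₂, rfl, hs₂⟩ := exists_isStd h₂
    exact ⟨.mul t₁ t₂, hw₁₂.symm, hs₁, hs₂, hw₁₂ ▸ hw, h₂,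
      fun s _ hsw hs hsLS => hmax s (hw₁₂ ▸ hs) (hw₁₂ ▸ hsw) hsLS⟩
termination_by w => w.length

theorem mword_ne_nil {α : Type*} : ∀ t : FreeMagma α, mword t ≠ []
  | .of _ => List.cons_ne_nil _ _
  | .mul a _ => by simp [mword, mword_ne_nil a]

def IsLeadingBracketing : FreeMagma X → Prop
  | .of _ => True
  | .mul a b => IsLeadingBracketing a ∧ IsLeadingBracketing b ∧
      llt (mword b ++ mword a) (mword a ++ mword b)

theorem IsLeadingBracketing.mul_of_isLS {s t : FreeMagma X} (hs : IsLeadingBracketing s)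
    (ht : IsLeadingBracketing t) (h : IsLS (mword s ++ mword t)) :
    IsLeadingBracketing (s.mul t) :=
  ⟨hs, ht, h.llt_rotate (mword_ne_nil s) (mword_ne_nil t)⟩

theorem IsStd.isLeadingBracketing : ∀ {t : FreeMagma X}, IsStd t → IsLeadingBracketing t
  | .of _, _ => trivial
  | .mul _ _, ⟨ha, hb, hab, _⟩ => ha.isLeadingBracketing.mul_of_isLS hb.isLeadingBracketing hab

def HasMonicLeadingWord (f : FA k X) (w : List X) : Prop :=
  f.coeff (FreeMonoid.ofList w) = 1 ∧
    ∀ m ∈ f.coeff.support, m.toList.length = w.length ∧ (m.toList = w ∨ llt m.toList w)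

theorem eq_or_llt_append {t₁ t₂ α β : List X} (hl : t₁.length = α.length)
    (h₁ : t₁ = α ∨ llt t₁ α) (h₂ : t₂ = β ∨ llt t₂ β) :
    t₁ ++ t₂ = α ++ β ∨ llt (t₁ ++ t₂) (α ++ β) := by
  rcases h₁ with rfl | h₁
  · rcases h₂ with rfl | h₂
    · exact Or.inl rfl
    · exact Or.inr ((llt_append_left_iff t₁).2 h₂)
  · exact Or.inr (llt_append_of_length_eq h₁ hl t₂ β)

theorem exists_mul_eq_of_mem_support_mul {R M : Type*} [Semiring R] [Mul M]
    {A B : MonoidAlgebra R M} {m : M} (hm : m ∈ (A * B).coeff.support) :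
    ∃ a ∈ A.coeff.support, ∃ b ∈ B.coeff.support, a * b = m := by
  classical
  exact Finset.mem_mul.1 (MonoidAlgebra.support_coeff_mul_subset A B hm)

theorem HasMonicLeadingWord.commutator {A B : FA k X} {α β : List X}
    (hA : HasMonicLeadingWord k A α) (hB : HasMonicLeadingWord k B β)
    (h : llt (β ++ α) (α ++ β)) : HasMonicLeadingWord k (A * B - B * A) (α ++ β) := by
  classical
  obtain ⟨hA₁, hA⟩ := hA
  obtain ⟨hB₁, hB⟩ := hB
  have hAB : ∀ m ∈ (A * B).coeff.support, m.toList.length = (α ++ β).length ∧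
      (m.toList = α ++ β ∨ llt m.toList (α ++ β)) := by
    intro m hm
    obtain ⟨a, ha, b, hb, rfl⟩ := exists_mul_eq_of_mem_support_mul hm
    obtain ⟨hal, ha⟩ := hA a ha
    obtain ⟨hbl, hb⟩ := hB b hb
    rw [FreeMonoid.toList_mul, List.length_append, List.length_append, hal, hbl]
    exact ⟨rfl, eq_or_llt_append hal ha hb⟩
  have hBA : ∀ m ∈ (B * A).coeff.support, m.toList.length = (α ++ β).length ∧
      llt m.toList (α ++ β) := by
    intro m hm
    obtain ⟨b, hb, a, ha, rfl⟩ := exists_mul_eq_of_mem_support_mul hm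
    obtain ⟨hal, ha⟩ := hA a ha
    obtain ⟨hbl, hb⟩ := hB b hb
    rw [FreeMonoid.toList_mul, List.length_append, List.length_append, hal, hbl, add_comm]
    refine ⟨rfl, ?_⟩
    rcases eq_or_llt_append hbl hb ha with he | hlt
    exacts [he ▸ h, llt_trans hlt h]
  have hAB₁ : (A * B).coeff (FreeMonoid.ofList (α ++ β)) = 1 := by
    rw [FreeMonoid.ofList_append, MonoidAlgebra.coeff_mul_mul_of_uniqueMul, hA₁, hB₁, one_mul]
    intro a b ha hb hab
    have := List.append_inj (congrArg FreeMonoid.toList hab) (hA a ha).1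
    exact ⟨FreeMonoid.toList.injective this.1, FreeMonoid.toList.injective this.2⟩
  have hBA₀ : (B * A).coeff (FreeMonoid.ofList (α ++ β)) = 0 := by
    by_contra h₀
    simpa [llt_irrefl] using hBA _ (Finsupp.mem_support_iff.2 h₀)
  refine ⟨by rw [MonoidAlgebra.coeff_sub, Finsupp.sub_apply, hAB₁, hBA₀, sub_zero], ?_⟩
  intro m hm
  rw [MonoidAlgebra.coeff_sub] at hm
  rcases Finset.mem_union.1 (Finsupp.support_sub hm) with hm | hm
  · exact hAB m hm
  · exact ⟨(hBA m hm).1, Or.inr (hBA m hm).2⟩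

theorem IsLeadingBracketing.hasMonicLeadingWord :
    ∀ {t : FreeMagma X}, IsLeadingBracketing t → HasMonicLeadingWord k (evalM k t) (mword t)
  | .of x, _ => by
    refine ⟨by simp [evalM, mword], fun m hm => ?_⟩
    rw [Finset.mem_singleton.1 (Finsupp.support_single_subset hm)]
    exact ⟨rfl, Or.inl rfl⟩
  | .mul _ _, ⟨ha, hb, h⟩ => ha.hasMonicLeadingWord.commutator k hb.hasMonicLeadingWord h

theorem HasMonicLeadingWord.isLeading {f : FA k X} {w : List X}
    (hf : HasMonicLeadingWord k f w) : IsLeading k f w := by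
  refine ⟨by rw [hf.1]; exact one_ne_zero, fun v hv => ?_⟩
  obtain ⟨hl, hv | hv⟩ := hf.2 _ (Finsupp.mem_support_iff.2 hv)
  exacts [Or.inl hv, Or.inr (Or.inr ⟨hl, hv⟩)]

def IsLongestLSPrefix (c b : List X) : Prop :=
  c <+: b ∧ IsLS c ∧ ∀ p, p <+: b → IsLS p → p.length ≤ c.length

theorem exists_isLongestLSPrefix {b : List X} (hb : b ≠ []) : ∃ c, IsLongestLSPrefix c b := by
  classical
  obtain ⟨x, b', rfl⟩ := List.exists_cons_of_ne_nil hb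
  obtain ⟨c, hc, hmax⟩ := Finset.exists_max_image ((x :: b').inits.filter (IsLS ·)).toFinset
    List.length ⟨[x], by simp [isLS_singleton]⟩
  simp only [List.mem_toFinset, List.mem_filter, List.mem_inits, decide_eq_true_eq] at hc hmax
  exact ⟨c, hc.1, hc.2, fun p hp hpLS => hmax p ⟨hp, hpLS⟩⟩

theorem IsLongestLSPrefix.not_llt {c b c₂ : List X} (hc : IsLongestLSPrefix c (c ++ b))
    (hc₂ : c₂ <+: b) (hc₂LS : IsLS c₂) : ¬ llt c₂ c := fun h => by
  have := hc.2.2 (c ++ c₂) (List.prefix_append_right_inj c |>.2 hc₂) (isLS_append hc.2.1 hc₂LS h)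
  simp only [List.length_append] at this
  exact hc₂LS.ne_nil (List.eq_nil_of_length_eq_zero (by omega))

/-- If `c` were a prefix of `m`, then by induction the longest Lyndon–Shirshov prefix `c₂` of the
rest `b'` of `b = c ++ b'` is not a prefix of `m ++ c`; so `c₂` is `llt`-above `c` and
prefix-incomparable with it, contradicting `b' < m ++ b`. -/
theorem IsLongestLSPrefix.not_prefix {m b c : List X} (hw : IsLS (m ++ b)) (hm : m ≠ [])
    (hc : IsLongestLSPrefix c b) : ¬ c <+: m := by
  obtain ⟨b', rfl⟩ := hc.1
  have hcLS := hc.2.1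
  rintro ⟨g, rfl⟩
  rcases eq_or_ne b' [] with rfl | hb'
  · refine hw.not_prefix_of_suffix (s := c) ⟨c ++ g, by simp⟩ (fun he => ?_) hcLS.ne_nil
      ⟨g ++ c, by simp⟩
    have := congrArg List.length he
    simp at this
    exact hcLS.ne_nil this.2
  obtain ⟨c₂, hc₂⟩ := exists_isLongestLSPrefix hb'
  have : b'.length < (c ++ b').length := by
    simp [List.length_pos_of_ne_nil hcLS.ne_nil]
  have hc₂m : ¬ c₂ <+: c ++ g ++ c :=
    hc₂.not_prefix (m := c ++ g ++ c) (by simpa using hw) (by simp [hcLS.ne_nil])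
  have hcc₂ : llt c c₂ := by
    refine (llt_or_llt_of_ne ?_).resolve_right (hc.not_llt hc₂.1 hc₂.2.1)
    rintro rfl
    exact hc₂m (List.prefix_append _ _ |>.trans (List.prefix_append _ _))
  have hc₂c : ¬ c₂ <+: c :=
    fun hp => hc₂m (hp.trans ((List.prefix_append c g).trans (List.prefix_append _ c)))
  have hcc₂' : ¬ c <+: c₂ := fun ⟨e, he⟩ => not_llt_append c e (he ▸ hcc₂)
  obtain ⟨s, rfl⟩ := hc₂.1
  have hsuf : llt (c₂ ++ s) (c ++ g ++ (c ++ (c₂ ++ s))) := by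
    refine hw.suffix_llt ⟨c ++ g ++ c, by simp⟩ (fun he => ?_) (by simp [hc₂.2.1.ne_nil])
    have := List.length_pos_of_ne_nil hcLS.ne_nil
    have := congrArg List.length he
    simp at this
    omega
  exact llt_asymm hsuf (by simpa using strongLlt_of_llt hcc₂ hcc₂' hc₂c (g ++ (c ++ (c₂ ++ s))) s)
termination_by b.length

theorem IsLongestLSPrefix.llt_append {m b c : List X} (hw : IsLS (m ++ b)) (hm : m ≠ [])
    (hc : IsLongestLSPrefix c b) : llt (c ++ m) (m ++ c) := by
  have hcm := hc.not_prefix hw hm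
  by_cases hmc : m <+: c
  · obtain ⟨e, rfl⟩ := hmc
    have he : e ≠ [] := by rintro rfl; exact hcm (by simp)
    rw [List.append_assoc, llt_append_left_iff]
    exact hc.2.1.llt_rotate hm he
  · obtain ⟨b', rfl⟩ := hc.1
    have hb : llt (c ++ b') (m ++ (c ++ b')) := by
      refine hw.suffix_llt ⟨m, rfl⟩ (fun he => hm ?_) (by simp [hc.2.1.ne_nil])
      simpa using congrArg List.length he
    exact strongLlt_of_llt (llt_of_llt_append hb hcm hmc) hcm hmc m c

theorem mword_foldl_mul {α : Type*} :
    ∀ (ts : List (FreeMagma α)) (t : FreeMagma α),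
      mword (ts.foldl FreeMagma.mul t) = mword t ++ (ts.map mword).flatten
  | [], _ => by simp
  | s :: ts, t => by simp [mword_foldl_mul ts, mword]

theorem exists_leftNormed_isLeadingBracketing {m c : List X} {tm : FreeMagma X}
    (hw : IsLS (m ++ c)) (htm : mword tm = m) (hg : IsLeadingBracketing tm) :
    ∃ cs : List (List X), (∀ x ∈ cs, IsLS x) ∧ List.IsChain (fun p q => ¬ llt q p) cs ∧
      cs.flatten = c ∧ ∃ tcs : List (FreeMagma X), tcs.map mword = cs ∧
        (∀ t ∈ tcs, IsStd t) ∧ IsLeadingBracketing (tcs.foldl FreeMagma.mul tm) := by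
  rcases eq_or_ne c [] with rfl | hc
  · exact ⟨[], by simp, List.IsChain.nil, rfl, [], rfl, by simp, hg⟩
  obtain ⟨c₁, hc₁⟩ := exists_isLongestLSPrefix hc
  obtain ⟨c', rfl⟩ := hc₁.1
  obtain ⟨t₁, ht₁, hstd₁⟩ := exists_isStd hc₁.2.1
  have hg₁ : IsLeadingBracketing (tm.mul t₁) := ⟨hg, hstd₁.isLeadingBracketing, by
    rw [htm, ht₁]
    exact hc₁.llt_append hw (htm ▸ mword_ne_nil tm)⟩
  have : c'.length < (c₁ ++ c').length := by simp [List.length_pos_of_ne_nil hc₁.2.1.ne_nil]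
  obtain ⟨cs, hcsLS, hchain, hflat, tcs, hmap, hstd, hgood⟩ :=
    exists_leftNormed_isLeadingBracketing (m := m ++ c₁) (c := c') (by simpa using hw)
      (by rw [mword, htm, ht₁]) hg₁
  refine ⟨c₁ :: cs, ?_, List.isChain_cons.2 ⟨fun y hy => ?_, hchain⟩, by simp [hflat],
    t₁ :: tcs, by simp [hmap, ht₁], ?_, hgood⟩
  · simpa [hc₁.2.1] using hcsLS
  · obtain ⟨cs', rfl⟩ := List.head?_eq_some_iff.1 hy
    exact hc₁.not_llt ⟨cs'.flatten, by simp [← hflat]⟩ (hcsLS y (by simp))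
  · simpa [hstd₁] using hstd
termination_by c.length

theorem mjoin_map_of {α : Type*} : ∀ t : FreeMagma α, mjoin (FreeMagma.map FreeMagma.of t) = t
  | .of _ => rfl
  | .mul a b => congrArg₂ FreeMagma.mul (mjoin_map_of a) (mjoin_map_of b)

theorem leaves_map_of {α : Type*} :
    ∀ t : FreeMagma α, leaves (FreeMagma.map FreeMagma.of t) = (mword t).map FreeMagma.of
  | .of _ => rfl
  | .mul a b => by
    rw [mword, List.map_append, ← leaves_map_of a, ← leaves_map_of b]
    rfl

def IsLeadingContext (w a d : List X) (s : FreeMagma X) : Prop :=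
  ∃ T : FreeMagma (FreeMagma X), leaves T = a.map .of ++ [s] ++ d.map .of ∧
    mword (mjoin T) = w ∧ IsLeadingBracketing (mjoin T)

theorem IsLeadingBracketing.isLeadingContext {s : FreeMagma X} (hs : IsLeadingBracketing s) :
    IsLeadingContext (mword s) [] [] s :=
  ⟨.of s, rfl, rfl, hs⟩

theorem IsLeadingContext.mul_left {w a d : List X} {s t : FreeMagma X}
    (ht : IsLeadingBracketing t) (h : IsLeadingContext w a d s) (hw : IsLS (mword t ++ w)) :
    IsLeadingContext (mword t ++ w) (mword t ++ a) d s := by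
  obtain ⟨T, hT, rfl, hgT⟩ := h
  exact ⟨(FreeMagma.map .of t).mul T, by simp [leaves, leaves_map_of, hT],
    by simp [mjoin, mjoin_map_of, mword],
    by simpa [mjoin, mjoin_map_of] using ht.mul_of_isLS hgT hw⟩

theorem IsLeadingContext.mul_right {w a d : List X} {s t : FreeMagma X}
    (h : IsLeadingContext w a d s) (ht : IsLeadingBracketing t) (hw : IsLS (w ++ mword t)) :
    IsLeadingContext (w ++ mword t) a (d ++ mword t) s := by
  obtain ⟨T, hT, rfl, hgT⟩ := h
  exact ⟨T.mul (FreeMagma.map .of t), by simp [leaves, leaves_map_of, hT],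
    by simp [mjoin, mjoin_map_of, mword],
    by simpa [mjoin, mjoin_map_of] using hgT.mul_of_isLS ht hw⟩

theorem factor_within_standard_factors {w₁ w₂ a u b : List X} (h₂ : IsLS w₂) (hu : IsLS u)
    (hmax : ∀ s, s <:+ w₁ ++ w₂ → s ≠ w₁ ++ w₂ → IsLS s → s.length ≤ w₂.length)
    (ha : a ≠ []) (hfac : w₁ ++ w₂ = a ++ (u ++ b)) :
    (∃ a', a = w₁ ++ a' ∧ w₂ = a' ++ u ++ b) ∨ ∃ e, w₁ = a ++ u ++ e ∧ b = e ++ w₂ := by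
  rcases List.append_eq_append_iff.1 hfac with ⟨a', rfl, rfl⟩ | ⟨c', rfl, hub⟩
  · exact Or.inl ⟨a', rfl, by simp⟩
  rcases List.append_eq_append_iff.1 hub with ⟨e, rfl, rfl⟩ | ⟨e, rfl, rfl⟩
  · exact Or.inr ⟨e, by simp, rfl⟩
  rcases eq_or_ne c' [] with rfl | hc'
  · exact Or.inl ⟨[], by simp, by simp⟩
  rcases eq_or_ne e [] with rfl | he
  · exact Or.inr ⟨[], by simp, by simp⟩
  -- otherwise `c' ++ w₂` would be a Lyndon–Shirshov suffix longer than `w₂`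
  have hLS := isLS_append_of_prefix hu h₂ rfl hc' he (List.prefix_append e b)
  have := hmax _ ⟨a, by simp⟩ (by simpa using ha) hLS
  simp only [List.length_append] at this
  exact absurd (List.eq_nil_of_length_eq_zero (by omega)) hc'

theorem exists_block_context {w a u b : List X} (hw : IsLS w) (hu : IsLS u)
    (hfac : w = a ++ u ++ b) :
    ∃ c d, b = c ++ d ∧ IsLS (u ++ c) ∧
      ∀ s : FreeMagma X, mword s = u ++ c → IsLeadingBracketing s → IsLeadingContext w a d s := by
  rcases eq_or_ne a [] with rfl | ha
  · refine ⟨b, [], by simp, by simpa [hfac] using hw, fun s hs hg => ?_⟩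
    simpa [hfac, hs] using hg.isLeadingContext
  have hlen : 2 ≤ w.length := by
    have := List.length_pos_of_ne_nil ha
    have := List.length_pos_of_ne_nil hu.ne_nil
    simp only [hfac, List.length_append]
    omega
  obtain ⟨w₁, w₂, hw₁₂, h₁, h₂, hmax⟩ := hw.exists_standard_factorization hlen
  have hl₁ : w₁.length < w.length := by simp [hw₁₂, List.length_pos_of_ne_nil h₂.ne_nil]
  have hl₂ : w₂.length < w.length := by simp [hw₁₂, List.length_pos_of_ne_nil h₁.ne_nil]
  rcases factor_within_standard_factors h₂ hu (hw₁₂ ▸ hmax) ha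
    (hw₁₂.symm.trans (hfac.trans (List.append_assoc a u b))) with ⟨a', rfl, hw₂⟩ | ⟨e, hw₁, rfl⟩
  · obtain ⟨c, d, rfl, hc, hext⟩ := exists_block_context h₂ hu hw₂
    obtain ⟨t₁, rfl, hstd₁⟩ := exists_isStd h₁
    subst hw₁₂
    exact ⟨c, d, rfl, hc, fun s hs hg => (hext s hs hg).mul_left hstd₁.isLeadingBracketing hw⟩
  · obtain ⟨c, d, rfl, hc, hext⟩ := exists_block_context h₁ hu hw₁
    obtain ⟨t₂, rfl, hstd₂⟩ := exists_isStd h₂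
    subst hw₁₂
    exact ⟨c, d ++ mword t₂, by simp, hc,
      fun s hs hg => (hext s hs hg).mul_right hstd₂.isLeadingBracketing hw⟩
termination_by w.length

/-- Shirshov's special bracketing: if `w = a ++ u ++ b` with `w`, `u` associative
Lyndon--Shirshov words, then `b = c ++ d` where `c` has Lyndon factorization
`c = c_1 ++ ... ++ c_k` (`c_1 ≤ ... ≤ c_k`), and there is a bracketing of `w` of
the form `[a [u c] d]`, whose block `[uc]` is the left-normed product
`[...[[u][c_1]]...[c_k]]` of the standard bracketings, and whose deg-lex leading
associative monomial is `w`. -/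
theorem stmt_8 {w u a b : List X} (hw : IsLS w) (hu : IsLS u)
    (hfac : w = a ++ u ++ b) :
    ∃ c d : List X, b = c ++ d ∧
      ∃ cs : List (List X), (∀ x ∈ cs, IsLS x) ∧
        List.Chain' (fun p q => ¬ llt q p) cs ∧ cs.flatten = c ∧
        ∃ tu : FreeMagma X, mword tu = u ∧ IsStd tu ∧
          ∃ tcs : List (FreeMagma X), tcs.map mword = cs ∧ (∀ t ∈ tcs, IsStd t) ∧
            ∃ T : FreeMagma (FreeMagma X),
              leaves T = (a.map FreeMagma.of) ++ [tcs.foldl FreeMagma.mul tu] ++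
                (d.map FreeMagma.of) ∧
              IsLeading k (evalM k (mjoin T)) w := by
  obtain ⟨tu, htu, hstd⟩ := exists_isStd hu
  obtain ⟨c, d, rfl, huc, hblock⟩ := exists_block_context hw hu hfac
  obtain ⟨cs, hcsLS, hchain, hflat, tcs, hmap, htcs, hgood⟩ :=
    exists_leftNormed_isLeadingBracketing huc htu hstd.isLeadingBracketing
  obtain ⟨T, hT, hmw, hgT⟩ := hblock _ (by rw [mword_foldl_mul, htu, hmap, hflat]) hgood
  exact ⟨c, d, rfl, cs, hcsLS, hchain, hflat, tu, htu, hstd, tcs, hmap, htcs, T, hT,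
    hmw ▸ (hgT.hasMonicLeadingWord k).isLeading⟩
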